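/- arXiv:1807.10128 — 4 statements merged into one kernel-verified Lean document; each statement's English description precedes it below -/
import Mathlib

section
/- Fix M ≥ 1, probabilities θ_0,...,θ_M summing to 1 with mean ā = ∑ m θ_m, and a finite sequence (π_k)_{k=0}^K of nonnegative reals summing to 1, with the convention π_j = 0 for j < 0 and j > K. Then ∑_{k=0}^{K+M-1} k · (∑_{m=0}^{M-1} π_{k-m} · r_m) = ā·Q + ∑_{m=1}^{M-1} (m(m+1)/2)·θ_{m+1}, where r_m = ∑_{i=m+1}^M θ_i and Q = ∑_{k=0}^K k·π_k. -/
open Finset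

private lemma sum_int_Icc_eq_range (g : ℤ → ℝ) (n : ℕ) :
    ∑ j ∈ Finset.Icc (0:ℤ) (n:ℤ), g j = ∑ j ∈ Finset.range (n+1), g (j:ℤ) := by
  refine Finset.sum_nbij' (fun j => j.toNat) (fun j => (j:ℤ)) ?_ ?_ ?_ ?_ ?_ <;>
    intros a ha <;> simp_all <;> omega

private lemma sum_nat_Icc_shift (f : ℕ → ℝ) (m K : ℕ) :
    ∑ k ∈ Finset.Icc m (K + m), f k = ∑ j ∈ Finset.range (K+1), f (m + j) := by
  refine Finset.sum_nbij' (fun k => k - m) (fun j => m + j) ?_ ?_ ?_ ?_ ?_ <;>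
    intros a ha <;> simp_all [Finset.mem_Icc, Finset.mem_range] <;> omega

private lemma gauss_real (n : ℕ) : ∑ m ∈ Finset.range n, (m:ℝ) = n * (n - 1) / 2 := by
  induction n with
  | zero => simp
  | succ n ih => rw [Finset.sum_range_succ, ih]; push_cast; ring

/-- Key algebraic identity expressing the weighted sum of stationary
probabilities against arrival tail probabilities in terms of the mean
queue length `Q` and the constant `ξ`. -/
theorem stmt_2 (M K : ℕ) (hM : 1 ≤ M)
    (θ : ℕ → ℝ) (hθ0 : ∀ m, 0 ≤ θ m)
    (hθsum : ∑ m ∈ Finset.range (M + 1), θ m = 1)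
    (abar : ℝ) (habar : abar = ∑ m ∈ Finset.range (M + 1), (m : ℝ) * θ m)
    (π : ℤ → ℝ) (hπ0 : ∀ j, 0 ≤ π j)
    (hπout : ∀ j : ℤ, j < 0 ∨ (K : ℤ) < j → π j = 0)
    (hπsum : ∑ k ∈ Finset.Icc (0:ℤ) (K:ℤ), π k = 1)
    (r : ℕ → ℝ) (hr : ∀ m, r m = ∑ i ∈ Finset.Icc (m + 1) M, θ i)
    (Q : ℝ) (hQ : Q = ∑ k ∈ Finset.Icc (0:ℤ) (K:ℤ), (k : ℝ) * π k) :
    ∑ k ∈ Finset.range (K + M), (k : ℝ) *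
        (∑ m ∈ Finset.range M, π ((k : ℤ) - (m : ℤ)) * r m)
      = abar * Q + ∑ m ∈ Finset.Icc 1 (M - 1), ((m : ℝ) * (m + 1) / 2) * θ (m + 1) := by
  -- Step 1: for each m < M, the shifted weighted sum equals Q + m.
  have key : ∀ m ∈ Finset.range M,
      ∑ k ∈ Finset.range (K + M), (k : ℝ) * π ((k : ℤ) - (m : ℤ)) = Q + m := by
    intro m hm
    rw [Finset.mem_range] at hm
    have hsub : Finset.Icc m (K + m) ⊆ Finset.range (K + M) := by
      intro k hk
      simp only [Finset.mem_Icc] at hk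
      simp only [Finset.mem_range]
      omega
    rw [← Finset.sum_subset hsub (by
      intro k hk hk2
      simp only [Finset.mem_range] at hk
      simp only [Finset.mem_Icc, not_and, not_le] at hk2
      have : π ((k : ℤ) - (m : ℤ)) = 0 := by
        apply hπout
        by_cases h : k < m
        · left; omega
        · right; have := hk2 (by omega); omega
      rw [this, mul_zero])]
    rw [sum_nat_Icc_shift (fun k => (k : ℝ) * π ((k : ℤ) - (m : ℤ))) m K]
    have h2 : ∑ j ∈ Finset.range (K+1), ((m + j : ℕ) : ℝ) * π (((m + j : ℕ) : ℤ) - (m : ℤ))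
        = ∑ j ∈ Finset.Icc (0:ℤ) (K:ℤ), (((j : ℝ)) + m) * π j := by
      rw [sum_int_Icc_eq_range (fun j => ((j : ℝ) + m) * π j) K]
      apply Finset.sum_congr rfl
      intro j hj
      have h1 : ((m + j : ℕ) : ℤ) - (m : ℤ) = (j : ℤ) := by push_cast; ring
      rw [h1]
      push_cast
      ring
    rw [h2]
    have h3 : ∑ j ∈ Finset.Icc (0:ℤ) (K:ℤ), ((j : ℝ) + m) * π j
        = (∑ j ∈ Finset.Icc (0:ℤ) (K:ℤ), (j : ℝ) * π j)
          + (m : ℝ) * ∑ j ∈ Finset.Icc (0:ℤ) (K:ℤ), π j := by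
      rw [Finset.mul_sum, ← Finset.sum_add_distrib]
      apply Finset.sum_congr rfl
      intro j _
      ring
    rw [h3, hπsum, hQ, mul_one]
  -- Step 2: swap the sums.
  have swap : ∑ k ∈ Finset.range (K + M), (k : ℝ) *
        (∑ m ∈ Finset.range M, π ((k : ℤ) - (m : ℤ)) * r m)
      = ∑ m ∈ Finset.range M, (Q + m) * r m := by
    simp_rw [Finset.mul_sum]
    rw [Finset.sum_comm]
    apply Finset.sum_congr rfl
    intro m hm
    have h4 : ∀ k : ℕ, (k : ℝ) * (π ((k : ℤ) - (m : ℤ)) * r m)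
        = ((k : ℝ) * π ((k : ℤ) - (m : ℤ))) * r m := fun k => by ring
    simp_rw [h4]
    rw [← Finset.sum_mul, key m hm]
  rw [swap]
  -- Step 3: express r as an indicator sum and swap again.
  have hrind : ∀ m ∈ Finset.range M,
      (Q + m) * r m = ∑ i ∈ Finset.range (M+1), (Q + m) * (if m < i then θ i else 0) := by
    intro m hm
    rw [← Finset.mul_sum, hr]
    congr 1
    rw [Finset.sum_ite, Finset.sum_const_zero, add_zero]
    apply Finset.sum_congr
    · ext i
      simp only [Finset.mem_Icc, Finset.mem_filter, Finset.mem_range]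
      omega
    · intros; rfl
  rw [Finset.sum_congr rfl hrind, Finset.sum_comm]
  -- Step 4: evaluate the inner sums.
  have inner : ∀ i ∈ Finset.range (M+1),
      ∑ m ∈ Finset.range M, (Q + m) * (if m < i then θ i else 0)
        = ((i : ℝ) * Q + (i : ℝ) * ((i : ℝ) - 1) / 2) * θ i := by
    intro i hi
    rw [Finset.mem_range] at hi
    have hfil : Finset.filter (fun m => m < i) (Finset.range M) = Finset.range i := by
      ext m
      simp only [Finset.mem_filter, Finset.mem_range]
      omega
    calc ∑ m ∈ Finset.range M, (Q + m) * (if m < i then θ i else 0)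
        = ∑ m ∈ Finset.range M, (if m < i then (Q + m) * θ i else 0) := by
          apply Finset.sum_congr rfl; intro m _; split <;> simp
      _ = ∑ m ∈ Finset.range i, (Q + m) * θ i := by
          rw [Finset.sum_ite, Finset.sum_const_zero, add_zero, hfil]
      _ = ((i : ℝ) * Q + (i : ℝ) * ((i : ℝ) - 1) / 2) * θ i := by
          rw [← Finset.sum_mul]
          congr 1
          rw [Finset.sum_add_distrib, Finset.sum_const, gauss_real, Finset.card_range,
            nsmul_eq_mul]
  rw [Finset.sum_congr rfl inner]
  -- Step 5: split and identify the two pieces.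
  have split : ∑ i ∈ Finset.range (M+1), ((i : ℝ) * Q + (i : ℝ) * ((i : ℝ) - 1) / 2) * θ i
      = Q * (∑ i ∈ Finset.range (M+1), (i : ℝ) * θ i)
        + ∑ i ∈ Finset.range (M+1), ((i : ℝ) * ((i : ℝ) - 1) / 2) * θ i := by
    rw [Finset.mul_sum, ← Finset.sum_add_distrib]
    apply Finset.sum_congr rfl
    intro i _
    ring
  rw [split, ← habar, mul_comm Q abar]
  congr 1
  -- Step 6: reindex the xi sum.
  have hsub2 : Finset.Icc 2 M ⊆ Finset.range (M+1) := by
    intro i hi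
    simp only [Finset.mem_Icc] at hi
    simp only [Finset.mem_range]
    omega
  rw [← Finset.sum_subset hsub2 (by
    intro i hi hi2
    simp only [Finset.mem_Icc, not_and, not_le] at hi2
    simp only [Finset.mem_range] at hi
    have : i = 0 ∨ i = 1 := by omega
    rcases this with rfl | rfl <;> simp)]
  refine Finset.sum_nbij' (fun i => i - 1) (fun m => m + 1) ?_ ?_ ?_ ?_ ?_ <;>
    intros a ha <;> simp only [Finset.mem_Icc] at * <;> try omega
  obtain ⟨h1, h2⟩ := ha
  have : a - 1 + 1 = a := by omega
  rw [this]
  rw [Nat.cast_sub (by omega : 1 ≤ a), Nat.cast_one]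
  ring
end

section
/- Fix M ≥ 1, probabilities θ_0,...,θ_M summing to 1, and (π_k)_{k=0}^K nonnegative summing to 1 (with π_j = 0 for j outside {0,...,K}). Let L = ∑_{k≥0} k · ∑_{m=0}^{M} θ_m π_{k+1-m} and Q = ∑_{k=0}^K k π_k. Then L = Q + θ_0·π_0 + ς, where ς = ∑_{m=1}^{M-1} m·θ_{m+1} − θ_0. -/
open Finset

/-!
Exchanging the two sums, `L = ∑ₘ θₘ ∑ₖ k π_{k+1-m}`. Over all of `ℤ` the inner sum is
`∑ⱼ (j + m - 1) πⱼ = Q + m - 1` after the shift `j = k + 1 - m`; restricting to `k ≥ 0` drops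
the term `k = -1`, which contributes `-π_{-m}`, nonzero only for `m = 0`. Averaging over `θ`
gives `Q + ∑ₘ (m - 1) θₘ + θ₀ π₀`, and `∑ₘ (m - 1) θₘ = ς`.
-/

theorem sum_range_succ_natCast_eq_sum_Icc {β : Type*} [AddCommMonoid β] (N : ℕ) (F : ℤ → β) :
    ∑ k ∈ range (N + 1), F k = ∑ k ∈ Icc (0 : ℤ) N, F k := by
  rw [Int.Icc_eq_finset_map, sum_map]
  simp

theorem sum_Icc_mul_comp_sub {K : ℤ} {f : ℤ → ℝ} (hf : ∀ j, j < 0 ∨ K < j → f j = 0)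
    (g : ℤ → ℝ) {a b c : ℤ} (ha : a ≤ c) (hb : c + K ≤ b) :
    ∑ k ∈ Icc a b, g k * f (k - c) = ∑ j ∈ Icc 0 K, g (j + c) * f j := by
  have hwindow : Icc c (c + K) ⊆ Icc a b := Icc_subset_Icc ha hb
  rw [← sum_subset hwindow fun k _ hk => by
    rw [hf (k - c) (by simp only [mem_Icc] at hk; omega), mul_zero]]
  have hmap : Icc c (c + K) = (Icc 0 K).map (addRightEmbedding c) := by
    rw [map_add_right_Icc, zero_add, add_comm]
  rw [hmap, sum_map]
  simp

theorem sum_range_mul_comp_add_one_sub {K n m : ℕ} {f : ℤ → ℝ}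
    (hf : ∀ j : ℤ, j < 0 ∨ (K : ℤ) < j → f j = 0) (hm : m ≤ n) :
    ∑ k ∈ range (K + n + 1), (k : ℝ) * f (k + 1 - m) =
      ∑ j ∈ Icc (0 : ℤ) K, ((j : ℝ) + m - 1) * f j + f (-m) := by
  have hshift := sum_Icc_mul_comp_sub hf (fun k : ℤ => (k : ℝ)) (a := -1) (b := K + n)
    (c := m - 1) (by omega) (by omega)
  have hinsert : Icc (-1 : ℤ) (K + n) = insert (-1) (Icc 0 ((K : ℤ) + n)) := by
    ext; simp only [mem_Icc, mem_insert]; omega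
  rw [hinsert, sum_insert (by simp)] at hshift
  have hcast := sum_range_succ_natCast_eq_sum_Icc (K + n) fun k => (k : ℝ) * f (k + 1 - m)
  simp only [Int.cast_natCast] at hcast
  rw [hcast]
  simp only [sub_sub_eq_add_sub, Int.cast_add, Int.cast_sub, Int.cast_natCast, Int.cast_one,
    Int.cast_neg, neg_mul, one_mul, ← add_sub_assoc] at hshift
  rw [show (-1 : ℤ) + 1 - m = -m by ring] at hshift
  push_cast
  linarith

theorem sum_range_succ_sub_one_mul (M : ℕ) (θ : ℕ → ℝ) :
    ∑ m ∈ range (M + 1), ((m : ℝ) - 1) * θ m =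
      ∑ m ∈ Icc 1 (M - 1), (m : ℝ) * θ (m + 1) - θ 0 := by
  have hsub : Icc 1 (M - 1) ⊆ range M := fun m hm => by
    simp only [mem_Icc, mem_range] at hm ⊢
    omega
  rw [sum_range_succ', ← sum_subset hsub]
  · simp [sub_eq_add_neg]
  · intro m hmM hm
    have : m = 0 := by simp only [mem_range, mem_Icc, not_and_or] at hmM hm; omega
    simp [this]

theorem stmt_3_general (M K : ℕ)
    (θ : ℕ → ℝ)
    (hθsum : ∑ m ∈ Finset.range (M + 1), θ m = 1)
    (π : ℤ → ℝ)
    (hπout : ∀ j : ℤ, j < 0 ∨ (K : ℤ) < j → π j = 0)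
    (hπsum : ∑ k ∈ Finset.Icc (0:ℤ) (K:ℤ), π k = 1)
    (L Q ς : ℝ)
    (hL : L = ∑ k ∈ Finset.range (K + M + 1), (k : ℝ) *
        (∑ m ∈ Finset.range (M + 1), θ m * π ((k : ℤ) + 1 - (m : ℤ))))
    (hQ : Q = ∑ k ∈ Finset.Icc (0:ℤ) (K:ℤ), (k : ℝ) * π k)
    (hς : ς = (∑ m ∈ Finset.Icc 1 (M - 1), (m : ℝ) * θ (m + 1)) - θ 0) :
    L = Q + θ 0 * π 0 + ς := by
  have hinner (m : ℕ) (hm : m ∈ range (M + 1)) :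
      ∑ k ∈ range (K + M + 1), (k : ℝ) * π (k + 1 - m) = Q + ((m : ℝ) - 1) + π (-m) := by
    rw [sum_range_mul_comp_add_one_sub hπout (Nat.lt_succ_iff.mp (mem_range.mp hm)), hQ,
      ← mul_one ((m : ℝ) - 1), ← hπsum, mul_sum, ← sum_add_distrib]
    congr 2 with j
    ring
  have hboundary : ∑ m ∈ range (M + 1), θ m * π (-m) = θ 0 * π 0 := by
    rw [sum_eq_single_of_mem 0 (by simp) fun m _ hm => by rw [hπout _ (by omega), mul_zero]]
    simp
  calc L = ∑ m ∈ range (M + 1), θ m * ∑ k ∈ range (K + M + 1), (k : ℝ) * π (k + 1 - m) := by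
        simp only [hL, mul_sum, mul_left_comm]
        exact sum_comm
    _ = Q * ∑ m ∈ range (M + 1), θ m + ∑ m ∈ range (M + 1), ((m : ℝ) - 1) * θ m
          + ∑ m ∈ range (M + 1), θ m * π (-m) := by
        rw [mul_sum, ← sum_add_distrib, ← sum_add_distrib]
        refine sum_congr rfl fun m hm => ?_
        rw [hinner m hm]
        ring
    _ = Q + θ 0 * π 0 + ς := by
      rw [hθsum, hboundary, sum_range_succ_sub_one_mul, hς]
      ring

/-- The identity `L = Q + θ₀ π₀ + ς` underlying the equivalence of the two LP
formulations (Lemma 3). -/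
theorem stmt_3 (M K : ℕ) (hM : 1 ≤ M)
    (θ : ℕ → ℝ) (hθ0 : ∀ m, 0 ≤ θ m)
    (hθsum : ∑ m ∈ Finset.range (M + 1), θ m = 1)
    (π : ℤ → ℝ) (hπ0 : ∀ j, 0 ≤ π j)
    (hπout : ∀ j : ℤ, j < 0 ∨ (K : ℤ) < j → π j = 0)
    (hπsum : ∑ k ∈ Finset.Icc (0:ℤ) (K:ℤ), π k = 1)
    (L Q ς : ℝ)
    (hL : L = ∑ k ∈ Finset.range (K + M + 1), (k : ℝ) *
        (∑ m ∈ Finset.range (M + 1), θ m * π ((k : ℤ) + 1 - (m : ℤ))))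
    (hQ : Q = ∑ k ∈ Finset.Icc (0:ℤ) (K:ℤ), (k : ℝ) * π k)
    (hς : ς = (∑ m ∈ Finset.Icc 1 (M - 1), (m : ℝ) * θ (m + 1)) - θ 0) :
    L = Q + θ 0 * π 0 + ς :=
  stmt_3_general M K θ hθsum π hπout hπsum L Q ς hL hQ hς
end

section
/- Let w₁ < w₂ with channel probabilities η_{w₁}, η_{w₂} > 0 and powers P_{w₁} > P_{w₂} > 0. Suppose a feasible point y has y_{k,w₁} > y_{k,w₂} for some k. Construct ŷ from y by setting ŷ_{k,w₂} = y_{k,w₁} and decreasing the components ŷ_{k,w} = y_{k,w} − Δ_{k,w} for w ≤ w₁ with nonnegative Δ_{k,w} chosen so that ∑_{w=1}^{w₁} η_w Δ_{k,w} = η_{w₂}(y_{k,w₁} − y_{k,w₂}) and ŷ_{k,w} ≥ 0. Then ∑_{w=1}^W η_w ŷ_{k,w} = ∑_{w=1}^W η_w y_{k,w} and ∑_{w=1}^W η_w P_w ŷ_{k,w} < ∑_{w=1}^W η_w P_w y_{k,w}. -/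
open Finset

/-- Exchange argument of Lemma 2: shifting transmission mass to a better
channel preserves the η-weighted sum while strictly reducing power. -/
theorem stmt_7 (W : ℕ) (η P : ℕ → ℝ) (y Δ : ℕ → ℝ)
    (w₁ w₂ : ℕ) (hw1 : 1 ≤ w₁) (hw12 : w₁ < w₂) (hw2 : w₂ ≤ W)
    (hη : ∀ w, 0 < η w)
    (hPpos : ∀ w, 0 < P w)
    (hPdec : ∀ v u, 1 ≤ v → v < u → u ≤ W → P u < P v)
    (hy0 : ∀ w, 0 ≤ y w)
    (hyy : y w₂ < y w₁)
    (hΔ0 : ∀ w, 0 ≤ Δ w)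
    (hΔbal : ∑ w ∈ Finset.Icc 1 w₁, η w * Δ w = η w₂ * (y w₁ - y w₂))
    (hΔle : ∀ w ∈ Finset.Icc 1 w₁, Δ w ≤ y w)
    (yhat : ℕ → ℝ)
    (hyhat : ∀ w, yhat w = if w = w₂ then y w₁ else if w ≤ w₁ then y w - Δ w else y w) :
    (∑ w ∈ Finset.Icc 1 W, η w * yhat w = ∑ w ∈ Finset.Icc 1 W, η w * y w) ∧
    (∑ w ∈ Finset.Icc 1 W, η w * P w * yhat w
       < ∑ w ∈ Finset.Icc 1 W, η w * P w * y w) := by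
  have hw2mem : w₂ ∈ Finset.Icc 1 W := by
    simp [Finset.mem_Icc]
    omega
  have hsub : Finset.Icc 1 w₁ ⊆ (Finset.Icc 1 W).erase w₂ := by
    intro x hx
    simp [Finset.mem_Icc, Finset.mem_erase] at hx ⊢
    omega
  -- key lemma: for any coefficient function f
  have key : ∀ f : ℕ → ℝ,
      ∑ w ∈ Finset.Icc 1 W, f w * (yhat w - y w)
        = f w₂ * (y w₁ - y w₂) - ∑ w ∈ Finset.Icc 1 w₁, f w * Δ w := by
    intro f
    rw [← Finset.add_sum_erase _ _ hw2mem]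
    have h1 : f w₂ * (yhat w₂ - y w₂) = f w₂ * (y w₁ - y w₂) := by
      rw [hyhat]; simp
    have h2 : ∑ w ∈ (Finset.Icc 1 W).erase w₂, f w * (yhat w - y w)
        = ∑ w ∈ Finset.Icc 1 w₁, -(f w * Δ w) := by
      rw [← Finset.sum_subset hsub]
      · apply Finset.sum_congr rfl
        intro x hx
        simp only [Finset.mem_Icc] at hx
        have hne : x ≠ w₂ := by omega
        have hle : x ≤ w₁ := hx.2
        rw [hyhat]
        simp [hne, hle]
      · intro x hx hnx
        have hx' := Finset.mem_erase.mp hx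
        have : ¬ x ≤ w₁ := by
          simp [Finset.mem_Icc] at hnx hx'
          omega
        rw [hyhat]
        simp [hx'.1, this]
    rw [h1, h2, Finset.sum_neg_distrib]
    ring
  constructor
  · have h := key η
    have : ∑ w ∈ Finset.Icc 1 W, η w * (yhat w - y w) = 0 := by
      rw [h, hΔbal]; ring
    have hsplit : ∑ w ∈ Finset.Icc 1 W, η w * (yhat w - y w)
        = ∑ w ∈ Finset.Icc 1 W, η w * yhat w - ∑ w ∈ Finset.Icc 1 W, η w * y w := by
      rw [← Finset.sum_sub_distrib]
      apply Finset.sum_congr rfl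
      intro x _; ring
    linarith [hsplit ▸ this]
  · have h := key (fun w => η w * P w)
    have hpos : (0:ℝ) < η w₂ * (y w₁ - y w₂) := by
      have := hη w₂
      nlinarith
    -- strict inequality: P w₂ * ∑ η Δ < ∑ η P Δ
    have hstrict : P w₂ * ∑ w ∈ Finset.Icc 1 w₁, η w * Δ w
        < ∑ w ∈ Finset.Icc 1 w₁, η w * P w * Δ w := by
      rw [Finset.mul_sum]
      have hsumpos : (0:ℝ) < ∑ w ∈ Finset.Icc 1 w₁, η w * Δ w := by
        rw [hΔbal]; exact hpos
      have hex : ∃ i ∈ Finset.Icc 1 w₁, (0:ℝ) < η i * Δ i := by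
        by_contra hc
        push_neg at hc
        have : ∑ w ∈ Finset.Icc 1 w₁, η w * Δ w ≤ 0 :=
          Finset.sum_nonpos hc
        linarith
      obtain ⟨i, hi, hipos⟩ := hex
      apply Finset.sum_lt_sum
      · intro j hj
        simp [Finset.mem_Icc] at hj
        have hPj : P w₂ < P j := hPdec j w₂ hj.1 (lt_of_le_of_lt hj.2 hw12) hw2
        have : 0 ≤ η j * Δ j := mul_nonneg (hη j).le (hΔ0 j)
        nlinarith
      · refine ⟨i, hi, ?_⟩
        simp [Finset.mem_Icc] at hi
        have hPi : P w₂ < P i := hPdec i w₂ hi.1 (lt_of_le_of_lt hi.2 hw12) hw2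
        nlinarith
    have hneg : ∑ w ∈ Finset.Icc 1 W, (η w * P w) * (yhat w - y w) < 0 := by
      rw [h]
      have : η w₂ * P w₂ * (y w₁ - y w₂) = P w₂ * (η w₂ * (y w₁ - y w₂)) := by ring
      rw [this, ← hΔbal]
      linarith
    have hsplit : ∑ w ∈ Finset.Icc 1 W, (η w * P w) * (yhat w - y w)
        = ∑ w ∈ Finset.Icc 1 W, η w * P w * yhat w - ∑ w ∈ Finset.Icc 1 W, η w * P w * y w := by
      rw [← Finset.sum_sub_distrib]
      apply Finset.sum_congr rfl
      intro x _; ring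
    linarith [hsplit ▸ hneg]
end

section
/- Let U ≥ 0 and let (η_w)_{w=1}^W be positive with ∑_w η_w = 1, and let c ∈ [0, U]. Among all vectors (y_w)_{w=1}^W with 0 ≤ y_1 ≤ y_2 ≤ ... ≤ y_W ≤ U and ∑_w η_w y_w = c, the power ∑_w η_w P_w y_w (with P_1 > P_2 > ... > P_W > 0) is minimized by a threshold vector: there exists T ∈ {1,...,W} and v ∈ [0,U] such that y_w = 0 for w < T, y_T = v, and y_w = U for w > T. -/
/-!
Choose `T` so that filling the channels after `T` to `U` undershoots the target mass `c` while
filling `T` as well overshoots it; the threshold vector `z` puts the remaining mass on channel `T`.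
Any feasible `y` has prefix sums `∑_{w ≤ t} η_w y_w` at least those of `z` (below `T` the vector `z`
vanishes, above `T` it is maximal) and the same total, so by Abel summation against the
decreasing prices `P_w` its power is at least that of `z`.
-/

open Finset

theorem Finset.sum_Icc_consecutive {M : Type*} [AddCommMonoid M] (f : ℕ → M) {a t b : ℕ}
    (hat : a ≤ t + 1) (htb : t ≤ b) :
    ∑ w ∈ Icc a t, f w + ∑ w ∈ Icc (t + 1) b, f w = ∑ w ∈ Icc a b, f w := by
  simp only [← Ico_add_one_right_eq_Icc]
  exact sum_Ico_consecutive f hat (by omega)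

theorem Nat.exists_mem_Icc_apply_succ_le_and_le_apply {α : Type*} [LinearOrder α] {g : ℕ → α}
    {c : α} {n : ℕ} (hn : 1 ≤ n) (hg₁ : c ≤ g 1) (hgn : g (n + 1) ≤ c) :
    ∃ T ∈ Icc 1 n, g (T + 1) ≤ c ∧ c ≤ g T := by
  induction n, hn using Nat.le_induction with
  | base => exact ⟨1, by simp, hgn, hg₁⟩
  | succ n hn ih =>
    by_cases hc : c ≤ g (n + 1)
    · exact ⟨n + 1, mem_Icc.mpr ⟨by omega, le_rfl⟩, hgn, hc⟩
    · obtain ⟨T, hT, hTc⟩ := ih (le_of_not_ge hc)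
      exact ⟨T, by simp at hT ⊢; omega, hTc⟩

theorem mul_sum_le_sum_mul_of_prefix_sum_nonneg {d Q : ℕ → ℝ} {n : ℕ}
    (hd : ∀ t ≤ n, 0 ≤ ∑ w ∈ Icc 1 t, d w) (hQ : AntitoneOn Q (Set.Icc 1 n)) :
    Q n * ∑ w ∈ Icc 1 n, d w ≤ ∑ w ∈ Icc 1 n, d w * Q w := by
  induction n with
  | zero => simp
  | succ n ih =>
    rw [sum_Icc_succ_top (by omega), sum_Icc_succ_top (by omega)]
    rcases n.eq_zero_or_pos with rfl | hn
    · simp [mul_comm]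
    have hprev := ih (fun t ht => hd t (by omega)) (hQ.mono (Set.Icc_subset_Icc_right (by omega)))
    have hQn : Q (n + 1) ≤ Q n := hQ ⟨hn, by omega⟩ ⟨by omega, le_rfl⟩ (by omega)
    linarith [mul_le_mul_of_nonneg_right hQn (hd n (by omega))]

theorem sum_mul_le_sum_mul_of_prefix_sum_le {a b Q : ℕ → ℝ} {n : ℕ}
    (hpre : ∀ t ≤ n, ∑ w ∈ Icc 1 t, a w ≤ ∑ w ∈ Icc 1 t, b w)
    (htot : ∑ w ∈ Icc 1 n, a w = ∑ w ∈ Icc 1 n, b w) (hQ : AntitoneOn Q (Set.Icc 1 n)) :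
    ∑ w ∈ Icc 1 n, a w * Q w ≤ ∑ w ∈ Icc 1 n, b w * Q w := by
  have h := mul_sum_le_sum_mul_of_prefix_sum_nonneg (d := fun w => b w - a w)
    (fun t ht => by simpa only [sum_sub_distrib, sub_nonneg] using hpre t ht) hQ
  simpa only [sum_sub_distrib, sub_mul, htot, sub_self, mul_zero, sub_nonneg] using h

def threshold (T : ℕ) (v U : ℝ) (w : ℕ) : ℝ :=
  if w < T then 0 else if w = T then v else U

namespace threshold

variable {T W : ℕ} {v U : ℝ}

theorem mem_Icc (hv : v ∈ Set.Icc 0 U) (w : ℕ) : threshold T v U w ∈ Set.Icc 0 U := by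
  unfold threshold
  split_ifs
  · exact ⟨le_rfl, hv.1.trans hv.2⟩
  · exact hv
  · exact ⟨hv.1.trans hv.2, le_rfl⟩

theorem monotone (hv : v ∈ Set.Icc 0 U) : Monotone (threshold T v U) := by
  intro w₁ w₂ hw
  unfold threshold
  split_ifs <;> first | omega | linarith [hv.1, hv.2]

theorem sum_mul (η : ℕ → ℝ) (hT : T ∈ Icc 1 W) :
    ∑ w ∈ Icc 1 W, η w * threshold T v U w = η T * v + U * ∑ w ∈ Icc (T + 1) W, η w := by
  obtain ⟨hT1, hTW⟩ := Finset.mem_Icc.mp hT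
  rw [← sum_Icc_consecutive _ (by omega) hTW, mul_sum]
  congr 1
  · rw [sum_eq_single_of_mem T (by simp; omega)]
    · simp [threshold]
    · intro w hw hwT
      simp only [threshold, if_pos (show w < T by simp at hw; omega), mul_zero]
  · refine sum_congr rfl fun w hw => ?_
    simp only [threshold, if_neg (show ¬w < T by simp at hw; omega),
      if_neg (show w ≠ T by simp at hw; omega), mul_comm]

theorem prefix_sum_mul_le {η y : ℕ → ℝ} (hη : ∀ w, 0 ≤ η w)
    (hy : ∀ w ∈ Icc 1 W, 0 ≤ y w ∧ y w ≤ U)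
    (htot : ∑ w ∈ Icc 1 W, η w * threshold T v U w = ∑ w ∈ Icc 1 W, η w * y w)
    {t : ℕ} (htW : t ≤ W) :
    ∑ w ∈ Icc 1 t, η w * threshold T v U w ≤ ∑ w ∈ Icc 1 t, η w * y w := by
  rcases lt_or_ge t T with htT | hTt
  · refine sum_le_sum fun w hw => ?_
    simp only [Finset.mem_Icc] at hw
    rw [threshold, if_pos (by omega), mul_zero]
    exact mul_nonneg (hη w) (hy w (by simp; omega)).1
  · have htail : ∑ w ∈ Icc (t + 1) W, η w * y w ≤ ∑ w ∈ Icc (t + 1) W, η w * threshold T v U w := by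
      refine sum_le_sum fun w hw => ?_
      simp only [Finset.mem_Icc] at hw
      rw [threshold, if_neg (by omega), if_neg (by omega)]
      exact mul_le_mul_of_nonneg_left (hy w (by simp; omega)).2 (hη w)
    have hz := sum_Icc_consecutive (fun w => η w * threshold T v U w) (by omega : 1 ≤ t + 1) htW
    have hy := sum_Icc_consecutive (fun w => η w * y w) (by omega : 1 ≤ t + 1) htW
    linarith

end threshold

theorem stmt_8_general (W : ℕ) (hW : 1 ≤ W) (U : ℝ)
    (η P : ℕ → ℝ) (hη : ∀ w, 0 < η w)
    (hηsum : ∑ w ∈ Finset.Icc 1 W, η w = 1)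
    (hPdec : ∀ v u, 1 ≤ v → v < u → u ≤ W → P u < P v)
    (c : ℝ) (hc : c ∈ Set.Icc 0 U) :
    ∃ T ∈ Finset.Icc 1 W, ∃ v ∈ Set.Icc (0:ℝ) U, ∃ z : ℕ → ℝ,
      (∀ w, z w = if w < T then 0 else if w = T then v else U) ∧
      (∀ w ∈ Finset.Icc 1 W, 0 ≤ z w ∧ z w ≤ U) ∧
      (∀ w₁ ∈ Finset.Icc 1 W, ∀ w₂ ∈ Finset.Icc 1 W, w₁ ≤ w₂ → z w₁ ≤ z w₂) ∧
      (∑ w ∈ Finset.Icc 1 W, η w * z w = c) ∧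
      (∀ y : ℕ → ℝ,
        (∀ w ∈ Finset.Icc 1 W, 0 ≤ y w ∧ y w ≤ U) →
        (∀ w₁ ∈ Finset.Icc 1 W, ∀ w₂ ∈ Finset.Icc 1 W, w₁ ≤ w₂ → y w₁ ≤ y w₂) →
        (∑ w ∈ Finset.Icc 1 W, η w * y w = c) →
        ∑ w ∈ Finset.Icc 1 W, η w * P w * z w ≤ ∑ w ∈ Finset.Icc 1 W, η w * P w * y w) := by
  obtain ⟨T, hT, hlow, hhigh⟩ := Nat.exists_mem_Icc_apply_succ_le_and_le_apply
    (g := fun t => U * ∑ w ∈ Icc t W, η w) hW (by simpa [hηsum] using hc.2) (by simpa using hc.1)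
  have hsplit := sum_Icc_consecutive η (Nat.le_succ T) (mem_Icc.mp hT).2
  rw [Icc_self, sum_singleton] at hsplit
  set v := (c - U * ∑ w ∈ Icc (T + 1) W, η w) / η T
  have hv : v ∈ Set.Icc 0 U := by
    constructor
    · exact div_nonneg (by linarith) (hη T).le
    · rw [div_le_iff₀ (hη T)]
      linarith [hsplit ▸ hhigh]
  have hzsum : ∑ w ∈ Icc 1 W, η w * threshold T v U w = c := by
    rw [threshold.sum_mul η hT, mul_div_cancel₀ _ (hη T).ne']
    ring
  have hP : AntitoneOn P (Set.Icc 1 W) := fun a ha b hb hab =>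
    hab.eq_or_lt.elim (fun h => h ▸ le_rfl) fun h => (hPdec a b ha.1 h hb.2).le
  refine ⟨T, hT, v, hv, threshold T v U, fun _ => rfl, fun w _ => threshold.mem_Icc hv w,
    fun _ _ _ _ h => threshold.monotone hv h, hzsum, fun y hy _ hysum => ?_⟩
  have hsum := hzsum.trans hysum.symm
  have hpower := sum_mul_le_sum_mul_of_prefix_sum_le
    (fun t ht => threshold.prefix_sum_mul_le (fun w => (hη w).le) hy hsum ht) hsum hP
  simpa only [mul_right_comm _ (P _)] using hpower

/-- Threshold structure of the power-minimizing allocation (Theorem 4):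
among nondecreasing vectors `0 ≤ y₁ ≤ ⋯ ≤ y_W ≤ U` with `∑ η_w y_w = c`,
the power `∑ η_w P_w y_w` is minimized by a threshold vector. -/
theorem stmt_8 (W : ℕ) (hW : 1 ≤ W) (U : ℝ) (hU : 0 ≤ U)
    (η P : ℕ → ℝ) (hη : ∀ w, 0 < η w)
    (hηsum : ∑ w ∈ Finset.Icc 1 W, η w = 1)
    (hPpos : ∀ w, 0 < P w)
    (hPdec : ∀ v u, 1 ≤ v → v < u → u ≤ W → P u < P v)
    (c : ℝ) (hc : c ∈ Set.Icc 0 U) :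
    ∃ T ∈ Finset.Icc 1 W, ∃ v ∈ Set.Icc (0:ℝ) U, ∃ z : ℕ → ℝ,
      (∀ w, z w = if w < T then 0 else if w = T then v else U) ∧
      (∀ w ∈ Finset.Icc 1 W, 0 ≤ z w ∧ z w ≤ U) ∧
      (∀ w₁ ∈ Finset.Icc 1 W, ∀ w₂ ∈ Finset.Icc 1 W, w₁ ≤ w₂ → z w₁ ≤ z w₂) ∧
      (∑ w ∈ Finset.Icc 1 W, η w * z w = c) ∧
      (∀ y : ℕ → ℝ,
        (∀ w ∈ Finset.Icc 1 W, 0 ≤ y w ∧ y w ≤ U) →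
        (∀ w₁ ∈ Finset.Icc 1 W, ∀ w₂ ∈ Finset.Icc 1 W, w₁ ≤ w₂ → y w₁ ≤ y w₂) →
        (∑ w ∈ Finset.Icc 1 W, η w * y w = c) →
        ∑ w ∈ Finset.Icc 1 W, η w * P w * z w ≤ ∑ w ∈ Finset.Icc 1 W, η w * P w * y w) :=
  stmt_8_general W hW U η P hη hηsum hPdec c hc
end
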